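/- For t ≥ 1, the minimum of K_{2t+2}^{4t+2}(r) over 0 ≤ r ≤ 4t+2 equals -C(4t+2, 2t+2)/(2t+1). -/

import Mathlib

/-- Binary Krawtchouk polynomial `K_ℓ^n(r) = ∑_{j=0}^ℓ (-1)^j C(r,j) C(n-r, ℓ-j)`. -/
def binKraw (n ℓ r : ℕ) : ℤ :=
  ∑ j ∈ Finset.range (ℓ + 1), (-1 : ℤ) ^ j * (r.choose j) * ((n - r).choose (ℓ - j))

/-!
`K_ℓ^n(r)` is the coefficient of `x^ℓ` in `(1 - x)^r (1 + x)^(n - r)`. Differentiating this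
generating polynomial gives the three-term recurrence
`(r + 1) K(r) + (n - r - 1) K(r + 2) = (n - 2ℓ) K(r + 1)`, and the substitution `x ↦ -x` gives
the symmetry `K(n - r) = (-1)^ℓ K(r)`.

For `n = 4t + 2`, `ℓ = 2t + 2` we have `n - 2ℓ = -2`, and the recurrence started from
`K(0) = C(n, ℓ)` and `K(1) = -C(n, ℓ) / (2t + 1)` yields, for `k ≤ t`,
`K(2k) = (-1)^k (2t + 1 - 2k) a_k` and `K(2k + 1) = (-1)^(k+1) (2k + 1) a_k`, where
`a_k = binKrawAmp t k` is given by `a_0 = C(n, ℓ) / (2t + 1)` and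
`a_(k+1) = a_k (2k + 1) / (4t + 1 - 2k)`. The amplitudes decrease on `k ≤ t + 1`,
`(4t + 1) a_1 = a_0` and `(2k + 1) a_k ≤ a_0`, so every value with `r ≤ 2t + 1` is at least `-a_0 = K(1)`; since `ℓ` is even, the symmetry covers `r > 2t + 1`.
-/

open Polynomial

theorem one_sub_X_eq_comp (R : Type*) [CommRing R] :
    (1 - X : R[X]) = (1 + X).comp (C (-1) * X) := by
  simp only [add_comp, one_comp, X_comp, map_neg, map_one]
  ring

theorem coeff_X_mul_derivative {R : Type*} [CommSemiring R] (p : R[X]) (n : ℕ) :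
    (X * derivative p).coeff n = n * p.coeff n := by
  cases n with
  | zero => simp
  | succ n => rw [coeff_X_mul, coeff_derivative]; push_cast; ring

theorem mul_derivative_pow {R : Type*} [CommSemiring R] (p : R[X]) (n : ℕ) :
    p * derivative (p ^ n) = n * derivative p * p ^ n := by
  cases n with
  | zero => simp
  | succ n => rw [derivative_pow_succ, map_add, map_natCast, map_one]; push_cast; ring

theorem one_sub_X_sq_mul_derivative {R : Type*} [CommRing R] (r m : ℕ) :
    (1 - X ^ 2) * derivative ((1 - X) ^ r * (1 + X) ^ m : R[X])
      = ((m : R[X]) * (1 - X) - (r : R[X]) * (1 + X)) * ((1 - X) ^ r * (1 + X) ^ m) := by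
  have hr := mul_derivative_pow (1 - X : R[X]) r
  have hm := mul_derivative_pow (1 + X : R[X]) m
  simp only [derivative_sub, derivative_add, derivative_one, derivative_X] at hr hm
  rw [derivative_mul]
  linear_combination (1 + X) * (1 + X) ^ m * hr + (1 - X) * (1 - X) ^ r * hm

theorem binKraw_eq_coeff (n ℓ r : ℕ) :
    binKraw n ℓ r = ((1 - X) ^ r * (1 + X) ^ (n - r) : ℤ[X]).coeff ℓ := by
  rw [one_sub_X_eq_comp, ← pow_comp, coeff_mul, Finset.Nat.sum_antidiagonal_eq_sum_range_succ_mk,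
    binKraw]
  refine Finset.sum_congr rfl fun j _ => ?_
  simp only [comp_C_mul_X_coeff, coeff_one_add_X_pow]
  ring

theorem binKraw_zero_right (n ℓ : ℕ) : binKraw n ℓ 0 = n.choose ℓ := by
  simp [binKraw_eq_coeff, coeff_one_add_X_pow]

theorem mul_binKraw_one_right (n ℓ : ℕ) :
    (n : ℤ) * binKraw n ℓ 1 = (n - 2 * ℓ) * n.choose ℓ := by
  rcases n with _ | n
  · rcases ℓ with _ | ℓ <;> simp
  rw [binKraw_eq_coeff, Nat.add_sub_cancel, pow_one, sub_mul, one_mul, coeff_sub]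
  rcases ℓ with _ | ℓ
  · simp [coeff_one_add_X_pow]
  rw [coeff_X_mul, coeff_one_add_X_pow, coeff_one_add_X_pow]
  rcases lt_or_ge n ℓ with hlt | hle
  · simp [Nat.choose_eq_zero_of_lt, hlt, hlt.trans (Nat.lt_succ_self ℓ)]
  have h1 := Nat.add_one_mul_choose_eq n ℓ
  have h2 := Nat.choose_mul_succ_eq n (ℓ + 1)
  rw [Nat.add_sub_add_right] at h2
  zify [hle] at h1 h2
  push_cast
  linear_combination h2 - h1

theorem binKraw_reflect (n ℓ r : ℕ) (h : r ≤ n) :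
    binKraw n ℓ (n - r) = (-1) ^ ℓ * binKraw n ℓ r := by
  have hcomp : ((1 - X) ^ (n - r) * (1 + X) ^ r : ℤ[X])
      = ((1 - X) ^ r * (1 + X) ^ (n - r) : ℤ[X]).comp (C (-1) * X) := by
    simp only [mul_comp, pow_comp, sub_comp, add_comp, one_comp, X_comp, map_neg, map_one]
    ring
  rw [binKraw_eq_coeff, binKraw_eq_coeff, Nat.sub_sub_self h, hcomp, comp_C_mul_X_coeff, mul_comm]

theorem binKraw_recurrence (r m ℓ : ℕ) :
    (r + 1) * binKraw (r + m + 2) ℓ r + (m + 1) * binKraw (r + m + 2) ℓ (r + 2)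
      = (r + m + 2 - 2 * ℓ : ℤ) * binKraw (r + m + 2) ℓ (r + 1) := by
  -- the coefficient of `x^ℓ` in `X * h'` is `ℓ` times that of `h`, which produces the `2ℓ`
  have key : C ((r : ℤ) + 1) * ((1 - X) ^ r * (1 + X) ^ (m + 2))
      + C ((m : ℤ) + 1) * ((1 - X) ^ (r + 2) * (1 + X) ^ m)
      - C ((r : ℤ) + m + 2) * ((1 - X) ^ (r + 1) * (1 + X) ^ (m + 1))
      = C (-2) * (X * derivative ((1 - X) ^ (r + 1) * (1 + X) ^ (m + 1) : ℤ[X])) := by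
    have hfactor : ((1 - X) ^ (r + 1) * (1 + X) ^ (m + 1) : ℤ[X])
        = (1 - X ^ 2) * ((1 - X) ^ r * (1 + X) ^ m) := by ring
    rw [hfactor, derivative_mul]
    simp only [derivative_sub, derivative_one, derivative_X_pow, map_add, map_natCast, map_neg,
      map_ofNat, map_one]
    linear_combination (2 * X) * one_sub_X_sq_mul_derivative (R := ℤ) r m
  have hcoeff := congrArg (coeff · ℓ) key
  simp only [coeff_sub, coeff_add, coeff_C_mul, coeff_X_mul_derivative] at hcoeff
  have e0 : r + m + 2 - r = m + 2 := by omega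
  have e1 : r + m + 2 - (r + 1) = m + 1 := by omega
  have e2 : r + m + 2 - (r + 2) = m := by omega
  rw [binKraw_eq_coeff, binKraw_eq_coeff, binKraw_eq_coeff, e0, e1, e2]
  linear_combination hcoeff

theorem binKraw_recurrence_4t_add_two (t r : ℕ) (hr : r ≤ 4 * t) :
    ((r : ℚ) + 1) * binKraw (4 * t + 2) (2 * t + 2) r
      + (4 * t + 1 - r : ℚ) * binKraw (4 * t + 2) (2 * t + 2) (r + 2)
      = -2 * binKraw (4 * t + 2) (2 * t + 2) (r + 1) := by
  obtain ⟨m, hm⟩ := Nat.exists_eq_add_of_le hr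
  have h := binKraw_recurrence r m (2 * t + 2)
  rw [show r + m + 2 = 4 * t + 2 by omega] at h
  have hmQ : (m : ℚ) = 4 * t - r := by
    rw [eq_sub_iff_add_eq, add_comm]; exact_mod_cast hm.symm
  have hQ := congrArg (Int.cast : ℤ → ℚ) h
  push_cast at hQ
  rw [hmQ] at hQ
  linear_combination hQ

def binKrawAmp (t : ℕ) : ℕ → ℚ
  | 0 => (4 * t + 2).choose (2 * t + 2) / (2 * t + 1)
  | k + 1 => binKrawAmp t k * (2 * k + 1) / (4 * t + 1 - 2 * k)

theorem binKrawAmp_succ_mul (t k : ℕ) (hk : k ≤ 2 * t) :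
    binKrawAmp t (k + 1) * (4 * t + 1 - 2 * k) = (2 * k + 1) * binKrawAmp t k := by
  have : (4 * t + 1 - 2 * k : ℚ) ≠ 0 := by
    have : (k : ℚ) ≤ 2 * t := by exact_mod_cast hk
    linarith
  rw [binKrawAmp]
  field_simp

theorem binKrawAmp_pos (t k : ℕ) (hk : k ≤ 2 * t + 1) : 0 < binKrawAmp t k := by
  induction k with
  | zero =>
    rw [binKrawAmp]
    have := Nat.choose_pos (show 2 * t + 2 ≤ 4 * t + 2 by omega)
    positivity
  | succ k ih =>
    have : (k : ℚ) + 1 ≤ 2 * t + 1 := by exact_mod_cast hk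
    rw [binKrawAmp]
    exact div_pos (mul_pos (ih (by omega)) (by positivity)) (by linarith)

theorem binKrawAmp_succ_le (t k : ℕ) (hk : k ≤ t) : binKrawAmp t (k + 1) ≤ binKrawAmp t k := by
  have hkt : (k : ℚ) ≤ t := by exact_mod_cast hk
  have hA := binKrawAmp_succ_mul t k (by omega)
  nlinarith [binKrawAmp_pos t k (by omega), binKrawAmp_pos t (k + 1) (by omega)]

theorem binKrawAmp_le_one (t k : ℕ) (h1 : 1 ≤ k) (hk : k ≤ t + 1) :
    binKrawAmp t k ≤ binKrawAmp t 1 := by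
  induction k, h1 using Nat.le_induction with
  | base => rfl
  | succ k h1 ih => exact (binKrawAmp_succ_le t k (by omega)).trans (ih (by omega))

theorem odd_mul_binKrawAmp_le (t k : ℕ) (hk : k ≤ t) :
    (2 * k + 1) * binKrawAmp t k ≤ binKrawAmp t 0 := by
  induction k with
  | zero => simp
  | succ k ih =>
    have hkt : (k : ℚ) + 1 ≤ t := by exact_mod_cast hk
    have hA := binKrawAmp_succ_mul t k (by omega)
    push_cast
    nlinarith [ih (by omega), binKrawAmp_pos t (k + 1) (by omega)]

theorem binKraw_eq_binKrawAmp (t k : ℕ) (hk : k ≤ t) :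
    (binKraw (4 * t + 2) (2 * t + 2) (2 * k) : ℚ)
        = (-1) ^ k * (2 * t + 1 - 2 * k) * binKrawAmp t k ∧
      (binKraw (4 * t + 2) (2 * t + 2) (2 * k + 1) : ℚ)
        = (-1) ^ (k + 1) * (2 * k + 1) * binKrawAmp t k := by
  induction k with
  | zero =>
    have hK1 := congrArg (Int.cast : ℤ → ℚ) (mul_binKraw_one_right (4 * t + 2) (2 * t + 2))
    push_cast at hK1
    simp only [binKrawAmp, Nat.mul_zero, binKraw_zero_right, zero_add]
    constructor
    · push_cast; field_simp; ring
    · field_simp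
      linear_combination (1 / 2 : ℚ) * hK1
  | succ k ih =>
    obtain ⟨hEven, hOdd⟩ := ih (by omega)
    have hkt : (k : ℚ) + 1 ≤ t := by exact_mod_cast hk
    have hAmp := binKrawAmp_succ_mul t k (by omega)
    have hEven' : (binKraw (4 * t + 2) (2 * t + 2) (2 * k + 2) : ℚ)
        = (-1) ^ (k + 1) * (2 * t - 1 - 2 * k) * binKrawAmp t (k + 1) := by
      have hrec := binKraw_recurrence_4t_add_two t (2 * k) (by omega)
      push_cast at hrec
      rw [hEven, hOdd] at hrec
      refine mul_left_cancel₀ (show (4 * t + 1 - 2 * k : ℚ) ≠ 0 by linarith) ?_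
      linear_combination hrec + (-1) ^ k * (2 * t - 1 - 2 * k) * hAmp
    have hOdd' : (binKraw (4 * t + 2) (2 * t + 2) (2 * k + 3) : ℚ)
        = (-1) ^ (k + 2) * (2 * k + 3) * binKrawAmp t (k + 1) := by
      have hrec := binKraw_recurrence_4t_add_two t (2 * k + 1) (by omega)
      push_cast at hrec
      rw [hOdd, hEven'] at hrec
      refine mul_left_cancel₀ (show (4 * t - 2 * k : ℚ) ≠ 0 by linarith) ?_
      linear_combination hrec - (-1) ^ k * (2 * k + 2) * hAmp
    refine ⟨?_, ?_⟩
    · rw [show 2 * (k + 1) = 2 * k + 2 by ring, hEven']; push_cast; ring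
    · rw [show 2 * (k + 1) + 1 = 2 * k + 3 by ring, hOdd']; push_cast; ring

theorem neg_le_neg_one_pow_mul {α : Type*} [Ring α] [LinearOrder α] [IsStrictOrderedRing α]
    {x : α} (n : ℕ) (hx : 0 ≤ x) : -x ≤ (-1) ^ n * x := by
  rcases neg_one_pow_eq_or α n with h | h <;> rw [h]
  · rw [one_mul]; exact neg_le_self hx
  · rw [neg_one_mul]

theorem neg_binKrawAmp_zero_le (t r : ℕ) (hr : r ≤ 2 * t + 1) :
    -binKrawAmp t 0 ≤ binKraw (4 * t + 2) (2 * t + 2) r := by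
  have ha0 := binKrawAmp_pos t 0 (by omega)
  obtain ⟨k, rfl | rfl⟩ := Nat.even_or_odd' r
  · rcases Nat.eq_zero_or_pos k with rfl | hk
    · rw [Nat.mul_zero, binKraw_zero_right]
      have : (0 : ℚ) ≤ (4 * t + 2).choose (2 * t + 2) := Nat.cast_nonneg _
      push_cast
      linarith
    have hkt : (k : ℚ) ≤ t := by exact_mod_cast (show k ≤ t by omega)
    have hk1 : (1 : ℚ) ≤ k := by exact_mod_cast hk
    have hak := binKrawAmp_pos t k (by omega)
    have hak1 := binKrawAmp_le_one t k hk (by omega)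
    have ha01 := binKrawAmp_succ_mul t 0 (by omega)
    push_cast at ha01
    have hbound : (2 * t + 1 - 2 * k) * binKrawAmp t k ≤ binKrawAmp t 0 := by nlinarith
    rw [(binKraw_eq_binKrawAmp t k (by omega)).1, mul_assoc]
    exact (neg_le_neg hbound).trans (neg_le_neg_one_pow_mul k (by nlinarith))
  · rw [(binKraw_eq_binKrawAmp t k (by omega)).2, mul_assoc]
    refine (neg_le_neg (odd_mul_binKrawAmp_le t k (by omega))).trans
      (neg_le_neg_one_pow_mul (k + 1) ?_)
    exact mul_nonneg (by positivity) (binKrawAmp_pos t k (by omega)).le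

theorem binKraw_4t_add_two_min_general (t : ℕ) :
    (∀ r : ℕ, r ≤ 4 * t + 2 →
      ((binKraw (4 * t + 2) (2 * t + 2) r : ℤ) : ℚ)
        ≥ -((4 * t + 2).choose (2 * t + 2) : ℚ) / (2 * t + 1)) ∧
    (∃ r : ℕ, r ≤ 4 * t + 2 ∧
      ((binKraw (4 * t + 2) (2 * t + 2) r : ℤ) : ℚ)
        = -((4 * t + 2).choose (2 * t + 2) : ℚ) / (2 * t + 1)) := by
  have hmin : -((4 * t + 2).choose (2 * t + 2) : ℚ) / (2 * t + 1) = -binKrawAmp t 0 := by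
    rw [binKrawAmp, neg_div]
  rw [hmin]
  refine ⟨fun r hr => ?_, ⟨1, by omega, ?_⟩⟩
  · rcases le_or_gt r (2 * t + 1) with hle | hgt
    · exact neg_binKrawAmp_zero_le t r hle
    · have hrefl := binKraw_reflect (4 * t + 2) (2 * t + 2) r hr
      rw [(show Even (2 * t + 2) from ⟨t + 1, by ring⟩).neg_one_pow, one_mul] at hrefl
      rw [ge_iff_le, ← hrefl]
      exact neg_binKrawAmp_zero_le t _ (by omega)
  · simpa using (binKraw_eq_binKrawAmp t 0 (by omega)).2

/-- The minimum of `K_{2t+2}^{4t+2}(r)` over `0 ≤ r ≤ 4t+2` equals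
`-C(4t+2,2t+2)/(2t+1)`. -/
theorem binKraw_4t_add_two_min (t : ℕ) (ht : 1 ≤ t) :
    (∀ r : ℕ, r ≤ 4 * t + 2 →
      ((binKraw (4 * t + 2) (2 * t + 2) r : ℤ) : ℚ)
        ≥ -((4 * t + 2).choose (2 * t + 2) : ℚ) / (2 * t + 1)) ∧
    (∃ r : ℕ, r ≤ 4 * t + 2 ∧
      ((binKraw (4 * t + 2) (2 * t + 2) r : ℤ) : ℚ)
        = -((4 * t + 2).choose (2 * t + 2) : ℚ) / (2 * t + 1)) :=
  binKraw_4t_add_two_min_general t
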